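/- arXiv:1911.03187 — 2 statements merged into one kernel-verified Lean document; each statement's English description precedes it below -/
import Mathlib

section
/- (Saddle point estimate) Let δ, C > 0 with C < δ² < 1/2, and set r(δ) = √((1 − 2δ²)/3), R(δ) = √((2/3)·(δ² − C)). Then for every h > 0, N ∈ ℕ and f ∈ C_b^∞(ℝ^N) supported in Ω⁰_N(R(δ), r(δ)) := {x : (1/N)Σ_k(x_k − x̄)² ≤ R(δ)² and |x̄| ≤ r(δ)}, one has ℰ_{h,N}[f] ≥ C·∫ f²·e^{−V_N/(hN)} dx. -/
open Real Finset MeasureTheory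

noncomputable section

/-- The normalized discrete Laplacian with periodic boundary conditions. -/
def Kd (μ : ℝ) (N : ℕ) (hN : N ≠ 0) (x : Fin N → ℝ) : Fin N → ℝ :=
  haveI : NeZero N := ⟨hN⟩
  fun k => μ / (4 * Real.sin (π / N) ^ 2) * (2 * x k - x (k + 1) - x (k - 1))

/-- The double-well energy `V_N(x) = ∑ₖ (1/4)(xₖ²−1)² + (1/2)⟨x, Kx⟩`. -/
def V (μ : ℝ) (N : ℕ) (hN : N ≠ 0) (x : Fin N → ℝ) : ℝ :=
  ∑ k, (1 / 4 : ℝ) * (x k ^ 2 - 1) ^ 2 + (1 / 2 : ℝ) * ∑ k, x k * Kd μ N hN x k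

/-- The average `x̄` of a vector. -/
def avg (N : ℕ) (x : Fin N → ℝ) : ℝ := (∑ k, x k) / N

/-! ### Auxiliary machinery -/

lemma proj_cd {N : ℕ} (k : Fin N) : ContDiff ℝ (⊤ : ℕ∞) (fun x : EuclideanSpace ℝ (Fin N) => x k) :=
  (EuclideanSpace.proj (𝕜 := ℝ) k).contDiff

lemma V_cd (μ : ℝ) (N : ℕ) (hN : N ≠ 0) :
    ContDiff ℝ (⊤ : ℕ∞) (fun x : EuclideanSpace ℝ (Fin N) => V μ N hN x) := by
  haveI : NeZero N := ⟨hN⟩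
  unfold V Kd
  apply ContDiff.add
  · exact ContDiff.sum fun k _ => contDiff_const.mul ((((proj_cd k).pow 2).sub contDiff_const).pow 2)
  · exact contDiff_const.mul (ContDiff.sum fun k _ => (proj_cd k).mul
      (contDiff_const.mul (((contDiff_const.mul (proj_cd k)).sub (proj_cd (k+1))).sub
        (proj_cd (k-1)))))

lemma sum_Kd (μ : ℝ) (N : ℕ) (hN : N ≠ 0) (x : Fin N → ℝ) : ∑ k, Kd μ N hN x k = 0 := by
  haveI : NeZero N := ⟨hN⟩
  unfold Kd
  rw [← Finset.mul_sum]
  have e1 : ∑ k : Fin N, x (k + 1) = ∑ k : Fin N, x k :=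
    Fintype.sum_equiv (Equiv.addRight (1 : Fin N)) _ _ (fun k => rfl)
  have e2 : ∑ k : Fin N, x (k - 1) = ∑ k : Fin N, x k :=
    Fintype.sum_equiv (Equiv.subRight (1 : Fin N)) _ _ (fun k => rfl)
  have : ∑ k : Fin N, (2 * x k - x (k + 1) - x (k - 1))
      = 2 * ∑ k : Fin N, x k - ∑ k : Fin N, x (k+1) - ∑ k : Fin N, x (k-1) := by
    rw [Finset.sum_sub_distrib, Finset.sum_sub_distrib, ← Finset.mul_sum]
  rw [this, e1, e2]
  ring

lemma hasDerivAt_line {N : ℕ} (F : EuclideanSpace ℝ (Fin N) → ℝ)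
    (y v : EuclideanSpace ℝ (Fin N)) (hF : DifferentiableAt ℝ F y) :
    HasDerivAt (fun t : ℝ => F (y + t • v)) (fderiv ℝ F y v) 0 := by
  have hline : HasDerivAt (fun t : ℝ => y + t • v) v 0 := by
    simpa using ((hasDerivAt_id (0:ℝ)).smul_const v).const_add y
  have h0 : y + (0:ℝ) • v = y := by simp
  have hF' : HasFDerivAt F (fderiv ℝ F y) (y + (0:ℝ) • v) := by
    rw [h0]; exact hF.hasFDerivAt
  exact hF'.comp_hasDerivAt 0 hline

lemma DV_apply (μ : ℝ) (N : ℕ) (hN : N ≠ 0) (c : ℝ) (y v : EuclideanSpace ℝ (Fin N))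
    (hv : ∀ k, v k = c) :
    fderiv ℝ (fun x : EuclideanSpace ℝ (Fin N) => V μ N hN x) y v
      = c * ∑ k, (y k ^ 3 - y k) := by
  have hdiff := ((V_cd μ N hN).differentiable (by simp)) y
  have h1 := hasDerivAt_line _ y v hdiff
  have hk : ∀ (t : ℝ) (j : Fin N), (y + t • v) j = y j + t * c := by
    intro t j
    simp [PiLp.add_apply, PiLp.smul_apply, hv j]
  have hfun : (fun t : ℝ => V μ N hN (y + t • v)) =
      (fun t : ℝ => ∑ k, (1/4 : ℝ) * ((y k + t * c)^2 - 1)^2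
        + (1/2 : ℝ) * ∑ k, (y k + t * c) * Kd μ N hN y k) := by
    funext t
    unfold V Kd
    haveI : NeZero N := ⟨hN⟩
    congr 1
    · exact Finset.sum_congr rfl fun k _ => by simp only [Pi.add_apply, Pi.smul_apply, smul_eq_mul, hv]
    · congr 1
      exact Finset.sum_congr rfl fun k _ => by simp only [Pi.add_apply, Pi.smul_apply, smul_eq_mul, hv]; ring
  change HasDerivAt (fun t : ℝ => V μ N hN (y + t • v)) _ 0 at h1
  rw [hfun] at h1
  have h2 : HasDerivAt (fun t : ℝ => ∑ k, (1/4 : ℝ) * ((y k + t * c)^2 - 1)^2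
        + (1/2 : ℝ) * ∑ k, (y k + t * c) * Kd μ N hN y k)
      (c * ∑ k, (y k ^ 3 - y k)) 0 := by
    have hA : ∀ k : Fin N, HasDerivAt (fun t : ℝ => (1/4:ℝ) * ((y k + t * c)^2 - 1)^2)
        ((1/4:ℝ) * (2 * ((y k + 0 * c)^2 - 1)^1 * (2 * (y k + 0 * c)^1 * (1 * c)))) 0 := by
      intro k
      have h0 : HasDerivAt (fun t : ℝ => y k + t * c) (1 * c) 0 :=
        ((hasDerivAt_id (0:ℝ)).mul_const c).const_add (y k)
      exact HasDerivAt.const_mul (1/4 : ℝ) (((h0.pow 2).sub_const 1).pow 2)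
    have hB : ∀ k : Fin N, HasDerivAt (fun t : ℝ => (y k + t * c) * Kd μ N hN y k)
        ((1 * c) * Kd μ N hN y k) 0 := by
      intro k
      have h0 : HasDerivAt (fun t : ℝ => y k + t * c) (1 * c) 0 :=
        ((hasDerivAt_id (0:ℝ)).mul_const c).const_add (y k)
      exact h0.mul_const _
    have hsumA := HasDerivAt.fun_sum (u := Finset.univ) (fun k _ => hA k)
    have hsumB := HasDerivAt.const_mul (1/2 : ℝ)
      (HasDerivAt.fun_sum (u := Finset.univ) (fun k _ => hB k))
    have h3 := hsumA.add hsumB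
    refine h3.congr_deriv ?_
    have e2 : ∑ k : Fin N, 1 * c * Kd μ N hN y k = 0 := by
      rw [← Finset.mul_sum, sum_Kd]; ring
    rw [e2, mul_zero, add_zero, Finset.mul_sum]
    exact Finset.sum_congr rfl fun k _ => by ring
  exact h1.unique h2

lemma P_cd (N : ℕ) :
    ContDiff ℝ (⊤ : ℕ∞) (fun x : EuclideanSpace ℝ (Fin N) => ∑ k, (x k ^ 3 - x k)) :=
  ContDiff.sum fun k _ => ((proj_cd k).pow 3).sub (proj_cd k)

lemma DP_apply (N : ℕ) (c : ℝ) (y v : EuclideanSpace ℝ (Fin N)) (hv : ∀ k, v k = c) :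
    fderiv ℝ (fun x : EuclideanSpace ℝ (Fin N) => ∑ k, (x k ^ 3 - x k)) y v
      = c * ∑ k, (3 * y k ^ 2 - 1) := by
  have hdiff := ((P_cd N).differentiable (by simp)) y
  have h1 := hasDerivAt_line _ y v hdiff
  have hk : ∀ (t : ℝ) (j : Fin N), (y + t • v) j = y j + t * c := by
    intro t j
    simp [PiLp.add_apply, PiLp.smul_apply, hv j]
  have hfun : (fun t : ℝ => ∑ k, ((y + t • v) k ^ 3 - (y + t • v) k)) =
      (fun t : ℝ => ∑ k, ((y k + t * c) ^ 3 - (y k + t * c))) := by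
    funext t
    exact Finset.sum_congr rfl fun k _ => by rw [hk t k]
  rw [hfun] at h1
  have h2 : HasDerivAt (fun t : ℝ => ∑ k, ((y k + t * c) ^ 3 - (y k + t * c)))
      (c * ∑ k, (3 * y k ^ 2 - 1)) 0 := by
    have hA : ∀ k : Fin N, HasDerivAt (fun t : ℝ => (y k + t * c) ^ 3 - (y k + t * c))
        ((3 * (y k + 0 * c)^2 * (1 * c)) - 1 * c) 0 := by
      intro k
      have h0 : HasDerivAt (fun t : ℝ => y k + t * c) (1 * c) 0 :=
        ((hasDerivAt_id (0:ℝ)).mul_const c).const_add (y k)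
      have := (h0.fun_pow 3).fun_sub h0
      exact this.congr_deriv (by norm_num)
    have h3 := HasDerivAt.fun_sum (u := Finset.univ) (fun k _ => hA k)
    refine h3.congr_deriv ?_
    rw [Finset.mul_sum]
    exact Finset.sum_congr rfl fun k _ => by ring
  exact h1.unique h2


/-- `W = V/(hN)`. -/
def Wd (μ : ℝ) (N : ℕ) (hN : N ≠ 0) (h : ℝ) (x : EuclideanSpace ℝ (Fin N)) : ℝ :=
  V μ N hN x / (h * N)

/-- first directional derivative of `W` along the constant unit vector. -/
def E1d (μ : ℝ) (N : ℕ) (hN : N ≠ 0) (h c : ℝ) (x : EuclideanSpace ℝ (Fin N)) : ℝ :=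
  c * (∑ k, (x k ^ 3 - x k)) / (h * N)

/-- second directional derivative of `W` along the constant unit vector. -/
def E2d (N : ℕ) (h c : ℝ) (x : EuclideanSpace ℝ (Fin N)) : ℝ :=
  c ^ 2 * (∑ k, (3 * x k ^ 2 - 1)) / (h * N)

/-- the ground-state transformed function `g = f e^{-W/2}`. -/
def gd (μ : ℝ) (N : ℕ) (hN : N ≠ 0) (h : ℝ) (f : EuclideanSpace ℝ (Fin N) → ℝ)
    (x : EuclideanSpace ℝ (Fin N)) : ℝ :=
  f x * Real.exp (-(Wd μ N hN h x) / 2)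

lemma Wd_cd (μ : ℝ) (N : ℕ) (hN : N ≠ 0) (h : ℝ) : ContDiff ℝ (⊤ : ℕ∞) (Wd μ N hN h) :=
  (V_cd μ N hN).div_const _

lemma E1d_cd (μ : ℝ) (N : ℕ) (hN : N ≠ 0) (h c : ℝ) : ContDiff ℝ (⊤ : ℕ∞) (E1d μ N hN h c) :=
  (contDiff_const.mul (P_cd N)).div_const _

lemma E2d_cd (N : ℕ) (h c : ℝ) : ContDiff ℝ (⊤ : ℕ∞) (E2d N h c) :=
  (contDiff_const.mul (ContDiff.sum fun k _ =>
    (contDiff_const.mul ((proj_cd k).pow 2)).sub contDiff_const)).div_const _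

lemma gd_cd (μ : ℝ) (N : ℕ) (hN : N ≠ 0) (h : ℝ) (f : EuclideanSpace ℝ (Fin N) → ℝ)
    (hf : ContDiff ℝ (⊤ : ℕ∞) f) : ContDiff ℝ (⊤ : ℕ∞) (gd μ N hN h f) :=
  hf.mul (((Wd_cd μ N hN h).neg.div_const 2).exp)

lemma DW_apply (μ : ℝ) (N : ℕ) (hN : N ≠ 0) (h c : ℝ) (y v : EuclideanSpace ℝ (Fin N))
    (hv : ∀ k, v k = c) :
    fderiv ℝ (Wd μ N hN h) y v = E1d μ N hN h c y := by
  have h1 := hasDerivAt_line (Wd μ N hN h) y v ((Wd_cd μ N hN h).differentiable (by simp) y)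
  have h2 : HasDerivAt (fun t : ℝ => Wd μ N hN h (y + t • v))
      ((c * ∑ k, (y k ^ 3 - y k)) / (h * N)) 0 := by
    have hV := hasDerivAt_line (fun x : EuclideanSpace ℝ (Fin N) => V μ N hN x) y v
      ((V_cd μ N hN).differentiable (by simp) y)
    rw [DV_apply μ N hN c y v hv] at hV
    exact hV.div_const _
  rw [h1.unique h2]
  unfold E1d
  rfl

lemma DE1_apply (μ : ℝ) (N : ℕ) (hN : N ≠ 0) (h c : ℝ) (y v : EuclideanSpace ℝ (Fin N))
    (hv : ∀ k, v k = c) :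
    fderiv ℝ (E1d μ N hN h c) y v = E2d N h c y := by
  have h1 := hasDerivAt_line (E1d μ N hN h c) y v ((E1d_cd μ N hN h c).differentiable (by simp) y)
  have h2 : HasDerivAt (fun t : ℝ => E1d μ N hN h c (y + t • v))
      ((c * (c * ∑ k, (3 * y k ^ 2 - 1))) / (h * N)) 0 := by
    have hP := hasDerivAt_line (fun x : EuclideanSpace ℝ (Fin N) => ∑ k, (x k ^ 3 - x k)) y v
      ((P_cd N).differentiable (by simp) y)
    rw [DP_apply N c y v hv] at hP
    exact (HasDerivAt.const_mul c hP).div_const _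
  rw [h1.unique h2]
  unfold E2d
  ring

lemma Dg_apply (μ : ℝ) (N : ℕ) (hN : N ≠ 0) (h c : ℝ) (f : EuclideanSpace ℝ (Fin N) → ℝ)
    (hf : ContDiff ℝ (⊤ : ℕ∞) f) (y v : EuclideanSpace ℝ (Fin N)) (hv : ∀ k, v k = c) :
    fderiv ℝ (gd μ N hN h f) y v
      = (fderiv ℝ f y v - f y * E1d μ N hN h c y / 2) * Real.exp (-(Wd μ N hN h y) / 2) := by
  have h00 : y + (0:ℝ) • v = y := by simp
  have h1 := hasDerivAt_line (gd μ N hN h f) y v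
    ((gd_cd μ N hN h f hf).differentiable (by simp) y)
  have hf1 := hasDerivAt_line f y v (hf.differentiable (by simp) y)
  have hW1 := hasDerivAt_line (Wd μ N hN h) y v ((Wd_cd μ N hN h).differentiable (by simp) y)
  have hexp1 : HasDerivAt (fun t : ℝ => Real.exp (-(Wd μ N hN h (y + t • v)) / 2))
      (Real.exp (-(Wd μ N hN h (y + (0:ℝ) • v)) / 2)
        * (-(fderiv ℝ (Wd μ N hN h) y v) / 2)) 0 := (hW1.neg.div_const 2).exp
  have h2 := hf1.mul hexp1
  have h3 := h1.unique h2
  rw [h00] at h3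
  rw [h3, DW_apply μ N hN h c y v hv]
  ring

lemma DF_apply (μ : ℝ) (N : ℕ) (hN : N ≠ 0) (h c : ℝ) (f : EuclideanSpace ℝ (Fin N) → ℝ)
    (hf : ContDiff ℝ (⊤ : ℕ∞) f) (y v : EuclideanSpace ℝ (Fin N)) (hv : ∀ k, v k = c) :
    fderiv ℝ (fun x => gd μ N hN h f x * gd μ N hN h f x * E1d μ N hN h c x) y v
      = 2 * (fderiv ℝ (gd μ N hN h f) y v * gd μ N hN h f y * E1d μ N hN h c y)
        + gd μ N hN h f y * gd μ N hN h f y * E2d N h c y := by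
  have h00 : y + (0:ℝ) • v = y := by simp
  have hgcd := gd_cd μ N hN h f hf
  have h1 := hasDerivAt_line (fun x => gd μ N hN h f x * gd μ N hN h f x * E1d μ N hN h c x) y v
    (((hgcd.mul hgcd).mul (E1d_cd μ N hN h c)).differentiable (by simp) y)
  have hg1 := hasDerivAt_line (gd μ N hN h f) y v (hgcd.differentiable (by simp) y)
  have hE11 := hasDerivAt_line (E1d μ N hN h c) y v ((E1d_cd μ N hN h c).differentiable (by simp) y)
  have h2 := (hg1.fun_mul hg1).fun_mul hE11
  have h3 := h1.unique h2
  rw [h00] at h3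
  rw [h3, DE1_apply μ N hN h c y v hv]
  ring

set_option maxHeartbeats 2000000 in
/-- Saddle point estimate: for `C < δ² < 1/2`, `r(δ) = √((1−2δ²)/3)`,
`R(δ) = √((2/3)(δ²−C))`, and any `f ∈ C_b^∞` supported in
`Ω⁰_N(R(δ), r(δ))`, one has `ℰ_{h,N}[f] ≥ C ∫ f² e^{−V_N/(hN)}`. -/
theorem stmt_15 (μ : ℝ) (hμ : 1 < μ) (δ C : ℝ) (hC : 0 < C) (hCδ : C < δ ^ 2)
    (hδ : δ ^ 2 < 1 / 2) (h : ℝ) (hh : 0 < h) (N : ℕ) (hN : N ≠ 0)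
    (f : EuclideanSpace ℝ (Fin N) → ℝ)
    (hf : ContDiff ℝ (⊤ : ℕ∞) f) (hfb : ∀ n : ℕ, ∃ B, ∀ x, ‖iteratedFDeriv ℝ n f x‖ ≤ B)
    (hsupp : tsupport f ⊆ {x : EuclideanSpace ℝ (Fin N) |
      (1 / N : ℝ) * ∑ k, (x k - avg N x) ^ 2 ≤ 2 / 3 * (δ ^ 2 - C) ∧
      |avg N x| ≤ Real.sqrt ((1 - 2 * δ ^ 2) / 3)}) :
    h * N * ∫ x, ‖gradient f x‖ ^ 2 * Real.exp (-(V μ N hN x) / (h * N))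
      ≥ C * ∫ x : EuclideanSpace ℝ (Fin N), f x ^ 2 * Real.exp (-(V μ N hN x) / (h * N)) := by
  classical
  haveI : NeZero N := ⟨hN⟩
  have hNpos : (0:ℝ) < N := by
    have := Nat.pos_of_ne_zero hN; exact_mod_cast this
  have hhN : (0:ℝ) < h * N := by positivity
  set c : ℝ := (Real.sqrt N)⁻¹ with hcdef
  have hc2 : c ^ 2 = (N:ℝ)⁻¹ := by
    rw [hcdef, inv_pow, Real.sq_sqrt hNpos.le]
  set v : EuclideanSpace ℝ (Fin N) := (EuclideanSpace.equiv (Fin N) ℝ).symm (fun _ => c)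
    with hvdef
  have hv : ∀ k, v k = c := fun k => rfl
  have hvnorm : ‖v‖ = 1 := by
    rw [EuclideanSpace.norm_eq]
    have h1 : ∀ k : Fin N, ‖v k‖ ^ 2 = (N:ℝ)⁻¹ := by
      intro k
      rw [hv k, Real.norm_eq_abs, sq_abs]
      exact hc2
    rw [Finset.sum_congr rfl fun k _ => h1 k]
    simp only [Finset.sum_const, Finset.card_univ, Fintype.card_fin, nsmul_eq_mul]
    rw [mul_inv_cancel₀ hNpos.ne', Real.sqrt_one]
  set g : EuclideanSpace ℝ (Fin N) → ℝ := gd μ N hN h f with hgdef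
  have hgcd : ContDiff ℝ (⊤ : ℕ∞) g := gd_cd μ N hN h f hf
  -- exponential algebra
  have hexp2 : ∀ x : EuclideanSpace ℝ (Fin N),
      Real.exp (-(Wd μ N hN h x) / 2) * Real.exp (-(Wd μ N hN h x) / 2)
        = Real.exp (-(V μ N hN x) / (h * N)) := by
    intro x
    rw [← Real.exp_add]
    congr 1
    unfold Wd
    ring
  -- support bounds
  have hsum : ∀ x ∈ tsupport f,
      ∑ k, (x k : ℝ) ^ 2 ≤ N * (2 / 3 * (δ ^ 2 - C)) + N * ((1 - 2 * δ ^ 2) / 3) := by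
    intro x hx
    obtain ⟨hA1, hA2⟩ := hsupp hx
    set m : ℝ := avg N x with hmdef
    have hm2 : m ^ 2 ≤ (1 - 2 * δ ^ 2) / 3 := by
      have hnn : (0:ℝ) ≤ (1 - 2 * δ ^ 2) / 3 := by nlinarith
      calc m ^ 2 = |m| ^ 2 := (sq_abs m).symm
        _ ≤ Real.sqrt ((1 - 2 * δ ^ 2) / 3) ^ 2 := by
            exact pow_le_pow_left₀ (abs_nonneg m) hA2 2
        _ = (1 - 2 * δ ^ 2) / 3 := Real.sq_sqrt hnn
    have hmsum : ∑ k, (x k : ℝ) = N * m := by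
      rw [hmdef]
      unfold avg
      field_simp
    have hid : ∑ k, ((x k : ℝ) - m) ^ 2 = ∑ k, (x k : ℝ) ^ 2 - N * m ^ 2 := by
      have e1 : ∑ k, ((x k : ℝ) - m) ^ 2 = ∑ k, ((x k : ℝ) ^ 2 - 2 * m * x k + m ^ 2) :=
        Finset.sum_congr rfl fun k _ => by ring
      rw [e1, Finset.sum_add_distrib, Finset.sum_sub_distrib, ← Finset.mul_sum, hmsum]
      simp only [Finset.sum_const, Finset.card_univ, Fintype.card_fin, nsmul_eq_mul]
      ring
    have hA1' : ∑ k, ((x k : ℝ) - m) ^ 2 ≤ N * (2 / 3 * (δ ^ 2 - C)) := by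
      have h1 : (1 / N : ℝ) * ∑ k, ((x k : ℝ) - m) ^ 2 ≤ 2 / 3 * (δ ^ 2 - C) := hA1
      have h2 := mul_le_mul_of_nonneg_left h1 hNpos.le
      calc ∑ k, ((x k : ℝ) - m) ^ 2 = (N:ℝ) * ((1 / N : ℝ) * ∑ k, ((x k : ℝ) - m) ^ 2) := by
            field_simp
        _ ≤ N * (2 / 3 * (δ ^ 2 - C)) := h2
    nlinarith [hid, hA1', hm2, hNpos]
  have hKc : IsCompact (tsupport f) := by
    apply (isCompact_closedBall (0 : EuclideanSpace ℝ (Fin N))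
      (Real.sqrt (N * (2 / 3 * (δ ^ 2 - C)) + N * ((1 - 2 * δ ^ 2) / 3)))).of_isClosed_subset
      (isClosed_tsupport f)
    intro x hx
    rw [Metric.mem_closedBall, dist_zero_right, EuclideanSpace.norm_eq]
    apply Real.sqrt_le_sqrt
    have e1 : ∀ k : Fin N, ‖x k‖ ^ 2 = (x k : ℝ) ^ 2 := fun k => by
      rw [Real.norm_eq_abs, sq_abs]
    rw [Finset.sum_congr rfl fun k _ => e1 k]
    exact hsum x hx
  have hfzero : ∀ x ∉ tsupport f, f x = 0 := fun x hx => image_eq_zero_of_notMem_tsupport hx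
  have hgzero : ∀ x ∉ tsupport f, g x = 0 := by
    intro x hx
    rw [hgdef]
    unfold gd
    rw [hfzero x hx, zero_mul]
  have hDgzero : ∀ x ∉ tsupport f, fderiv ℝ g x = 0 := by
    intro x hx
    have hop : IsOpen (tsupport f)ᶜ := (isClosed_tsupport f).isOpen_compl
    have hev : g =ᶠ[nhds x] (fun _ => (0:ℝ)) := by
      filter_upwards [hop.mem_nhds hx] with z hz
      exact hgzero z hz
    rw [hev.fderiv_eq]
    exact fderiv_const_apply 0
  -- integrability helper
  have hint : ∀ φ : EuclideanSpace ℝ (Fin N) → ℝ, Continuous φ →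
      (∀ x ∉ tsupport f, φ x = 0) → Integrable φ := by
    intro φ hφc hφ0
    exact hφc.integrable_of_hasCompactSupport (HasCompactSupport.intro hKc hφ0)
  -- continuity facts
  have hfC : Continuous f := hf.continuous
  have hgC : Continuous g := hgcd.continuous
  have hWC : Continuous (Wd μ N hN h) := (Wd_cd μ N hN h).continuous
  have hE1C : Continuous (E1d μ N hN h c) := (E1d_cd μ N hN h c).continuous
  have hE2C : Continuous (E2d N h c) := (E2d_cd N h c).continuous
  have hVC : Continuous (fun x : EuclideanSpace ℝ (Fin N) => V μ N hN x) :=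
    (V_cd μ N hN).continuous
  have hρC : Continuous (fun x : EuclideanSpace ℝ (Fin N) =>
      Real.exp (-(V μ N hN x) / (h * N))) := (Real.continuous_exp.comp (hVC.neg.div_const _))
  have hDfC : Continuous (fun x => fderiv ℝ f x v) :=
    ((hf.fderiv_right (m := (⊤ : ℕ∞)) le_rfl).clm_apply contDiff_const).continuous
  have hDgC : Continuous (fun x => fderiv ℝ g x v) :=
    ((hgcd.fderiv_right (m := (⊤ : ℕ∞)) le_rfl).clm_apply contDiff_const).continuous
  have hgradC : Continuous (gradient f) := by
    have h1 : Continuous (fun x => fderiv ℝ f x) := hf.continuous_fderiv (by simp)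
    exact (InnerProductSpace.toDual ℝ (EuclideanSpace ℝ (Fin N))).symm.continuous.comp h1
  have hDfzero : ∀ x ∉ tsupport f, fderiv ℝ f x = 0 := by
    intro x hx
    have hop : IsOpen (tsupport f)ᶜ := (isClosed_tsupport f).isOpen_compl
    have hev : f =ᶠ[nhds x] (fun _ => (0:ℝ)) := by
      filter_upwards [hop.mem_nhds hx] with z hz
      exact hfzero z hz
    rw [hev.fderiv_eq]
    exact fderiv_const_apply 0
  -- integrability of the various integrands
  have intI1 : Integrable (fun x => ‖gradient f x‖ ^ 2 * Real.exp (-(V μ N hN x) / (h * N))) := by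
    apply hint _ (((hgradC.norm.pow 2).mul hρC))
    intro x hx
    simp only [Pi.mul_apply, Pi.pow_apply, Pi.add_apply, Pi.div_apply]
    have hg0 : gradient f x = 0 := by
      unfold gradient
      rw [hDfzero x hx, map_zero]
    rw [hg0]
    simp
  have intI2 : Integrable (fun x => (fderiv ℝ f x v) ^ 2 * Real.exp (-(V μ N hN x) / (h * N))) := by
    apply hint _ ((hDfC.pow 2).mul hρC)
    intro x hx
    simp only [Pi.mul_apply, Pi.pow_apply, Pi.add_apply, Pi.div_apply]
    rw [hDfzero x hx]
    simp
  have intIA : Integrable (fun x =>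
      (fderiv ℝ g x v) ^ 2 + g x ^ 2 * (E1d μ N hN h c x) ^ 2 / 4) := by
    apply hint _ ((hDgC.pow 2).add (((hgC.pow 2).mul (hE1C.pow 2)).div_const 4))
    intro x hx
    simp only [Pi.mul_apply, Pi.pow_apply, Pi.add_apply, Pi.div_apply]
    rw [hDgzero x hx, hgzero x hx]
    simp
  have intIB : Integrable (fun x => fderiv ℝ g x v * g x * E1d μ N hN h c x) := by
    apply hint _ ((hDgC.mul hgC).mul hE1C)
    intro x hx
    simp only [Pi.mul_apply, Pi.pow_apply, Pi.add_apply, Pi.div_apply]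
    rw [hgzero x hx]
    simp
  have intID : Integrable (fun x => g x * g x * E2d N h c x) := by
    apply hint _ ((hgC.mul hgC).mul hE2C)
    intro x hx
    simp only [Pi.mul_apply, Pi.pow_apply, Pi.add_apply, Pi.div_apply]
    rw [hgzero x hx]
    simp
  have intICf : Integrable (fun x => C * (f x ^ 2 * Real.exp (-(V μ N hN x) / (h * N)))) := by
    apply hint _ (continuous_const.mul ((hfC.pow 2).mul hρC))
    intro x hx
    simp only [Pi.mul_apply, Pi.pow_apply, Pi.add_apply, Pi.div_apply]
    rw [hfzero x hx]
    simp
  have intIE : Integrable (fun x => -(h * N) / 2 * (g x * g x * E2d N h c x)) := by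
    apply hint _ (continuous_const.mul ((hgC.mul hgC).mul hE2C))
    intro x hx
    simp only [Pi.mul_apply, Pi.pow_apply, Pi.add_apply, Pi.div_apply]
    rw [hgzero x hx]
    simp
  -- Step 1: Cauchy-Schwarz in the constant direction
  have hI2_le_I1 : ∫ x, (fderiv ℝ f x v) ^ 2 * Real.exp (-(V μ N hN x) / (h * N))
      ≤ ∫ x, ‖gradient f x‖ ^ 2 * Real.exp (-(V μ N hN x) / (h * N)) := by
    apply integral_mono intI2 intI1
    intro x
    apply mul_le_mul_of_nonneg_right _ (Real.exp_nonneg _)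
    have hinner : (inner ℝ (gradient f x) v : ℝ) = fderiv ℝ f x v :=
      InnerProductSpace.toDual_symm_apply
    calc (fderiv ℝ f x v) ^ 2 = |(inner ℝ (gradient f x) v : ℝ)| ^ 2 := by rw [sq_abs, hinner]
      _ ≤ (‖gradient f x‖ * ‖v‖) ^ 2 :=
          pow_le_pow_left₀ (abs_nonneg _) (abs_real_inner_le_norm _ _) 2
      _ = ‖gradient f x‖ ^ 2 := by rw [hvnorm]; ring
  -- Step 2: ground state transformation, pointwise
  have hI2_eq : (fun x => (fderiv ℝ f x v) ^ 2 * Real.exp (-(V μ N hN x) / (h * N)))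
      = (fun x => (fderiv ℝ g x v + g x * E1d μ N hN h c x / 2) ^ 2) := by
    funext x
    have hDg : fderiv ℝ g x v = (fderiv ℝ f x v - f x * E1d μ N hN h c x / 2)
        * Real.exp (-(Wd μ N hN h x) / 2) := by
      rw [hgdef]
      exact Dg_apply μ N hN h c f hf x v hv
    have hgx : g x = f x * Real.exp (-(Wd μ N hN h x) / 2) := rfl
    have h5 : fderiv ℝ g x v + g x * E1d μ N hN h c x / 2
        = fderiv ℝ f x v * Real.exp (-(Wd μ N hN h x) / 2) := by
      rw [hDg, hgx]
      ring
    rw [h5, ← hexp2 x]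
    ring
  -- Step 3: expansion of the square
  have hexpand : ∫ x, (fderiv ℝ g x v + g x * E1d μ N hN h c x / 2) ^ 2
      = (∫ x, ((fderiv ℝ g x v) ^ 2 + g x ^ 2 * (E1d μ N hN h c x) ^ 2 / 4))
        + ∫ x, fderiv ℝ g x v * g x * E1d μ N hN h c x := by
    have e : (fun x => (fderiv ℝ g x v + g x * E1d μ N hN h c x / 2) ^ 2)
        = (fun x => ((fderiv ℝ g x v) ^ 2 + g x ^ 2 * (E1d μ N hN h c x) ^ 2 / 4)
            + fderiv ℝ g x v * g x * E1d μ N hN h c x) := by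
      funext x
      ring
    rw [e, integral_add intIA intIB]
  have hIAnn : 0 ≤ ∫ x, ((fderiv ℝ g x v) ^ 2 + g x ^ 2 * (E1d μ N hN h c x) ^ 2 / 4) :=
    integral_nonneg fun x => by positivity
  -- Step 4: integration by parts
  have hIBP : ∫ x, fderiv ℝ g x v * g x * E1d μ N hN h c x
      = -(1/2) * ∫ x, g x * g x * E2d N h c x := by
    set F : EuclideanSpace ℝ (Fin N) → ℝ := fun x => g x * g x * E1d μ N hN h c x with hFdef
    have hFcd : ContDiff ℝ (⊤ : ℕ∞) F := (hgcd.mul hgcd).mul (E1d_cd μ N hN h c)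
    have hFsupp : HasCompactSupport F := by
      apply HasCompactSupport.intro hKc
      intro x hx
      rw [hFdef]
      simp only [hgzero x hx]
      ring
    obtain ⟨L, hL⟩ := ContDiff.lipschitzWith_of_hasCompactSupport hFsupp hFcd (by simp)
    have h0 := LipschitzWith.integral_lineDeriv_mul_eq (μ := volume)
      (LipschitzWith.const (1:ℝ)) hL hFsupp (-v)
    have hl1 : ∀ (x : EuclideanSpace ℝ (Fin N)) (w : EuclideanSpace ℝ (Fin N)),
        lineDeriv ℝ (fun _ : EuclideanSpace ℝ (Fin N) => (1:ℝ)) x w = 0 := by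
      intro x w
      simp [lineDeriv]
    simp only [hl1, zero_mul, integral_zero, neg_neg, mul_one] at h0
    have h2 : ∀ x, lineDeriv ℝ F x v = fderiv ℝ F x v := fun x =>
      DifferentiableAt.lineDeriv_eq_fderiv ((hFcd.differentiable (by simp)) x)
    have h3 : ∀ x, fderiv ℝ F x v
        = 2 * (fderiv ℝ g x v * g x * E1d μ N hN h c x) + g x * g x * E2d N h c x := by
      intro x
      rw [hFdef, hgdef]
      exact DF_apply μ N hN h c f hf x v hv
    have h4 : (0:ℝ) = ∫ x, (2 * (fderiv ℝ g x v * g x * E1d μ N hN h c x)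
        + g x * g x * E2d N h c x) := by
      refine h0.trans ?_
      congr 1
      funext x
      rw [h2 x, h3 x]
    rw [integral_add (intIB.const_mul 2) intID, integral_const_mul] at h4
    linarith
  -- Step 5: the key coefficient bound on the support
  have hptC : ∀ x, C * (f x ^ 2 * Real.exp (-(V μ N hN x) / (h * N)))
      ≤ -(h * N) / 2 * (g x * g x * E2d N h c x) := by
    intro x
    by_cases hx : x ∈ tsupport f
    · have hsplit : ∑ k, (3 * (x k : ℝ) ^ 2 - 1) = 3 * ∑ k, (x k : ℝ) ^ 2 - N := by
        rw [Finset.sum_sub_distrib, ← Finset.mul_sum]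
        simp
      have hE2x : -(h * N) / 2 * E2d N h c x = 1/2 - 3 / (2 * N) * ∑ k, (x k : ℝ) ^ 2 := by
        unfold E2d
        rw [hc2, hsplit]
        field_simp
        ring
      have hs := hsum x hx
      have hcoef : C ≤ 1/2 - 3 / (2 * (N:ℝ)) * ∑ k, (x k : ℝ) ^ 2 := by
        have h1 : 3 / (2 * (N:ℝ)) * ∑ k, (x k : ℝ) ^ 2
            ≤ 3 / (2 * (N:ℝ)) * (N * (2 / 3 * (δ ^ 2 - C)) + N * ((1 - 2 * δ ^ 2) / 3)) :=
          mul_le_mul_of_nonneg_left hs (by positivity)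
        have h2 : 3 / (2 * (N:ℝ)) * (N * (2 / 3 * (δ ^ 2 - C)) + N * ((1 - 2 * δ ^ 2) / 3))
            = 1/2 - C := by
          field_simp
          ring
        linarith
      have hgx : g x = f x * Real.exp (-(Wd μ N hN h x) / 2) := rfl
      have hgx2 : g x * g x = f x ^ 2 * Real.exp (-(V μ N hN x) / (h * N)) := by
        rw [hgx, ← hexp2 x]
        ring
      have h1 : -(h * N) / 2 * (g x * g x * E2d N h c x)
          = (1/2 - 3 / (2 * (N:ℝ)) * ∑ k, (x k : ℝ) ^ 2)
            * (f x ^ 2 * Real.exp (-(V μ N hN x) / (h * N))) := by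
        rw [← hE2x, ← hgx2]
        ring
      rw [h1]
      exact mul_le_mul_of_nonneg_right hcoef (by positivity)
    · rw [hfzero x hx, hgzero x hx]
      simp
  -- assembling everything
  have h6 : C * (∫ x : EuclideanSpace ℝ (Fin N), f x ^ 2 * Real.exp (-(V μ N hN x) / (h * N)))
      ≤ -(h * N) / 2 * ∫ x, g x * g x * E2d N h c x := by
    rw [← integral_const_mul, ← integral_const_mul]
    exact integral_mono intICf intIE hptC
  rw [ge_iff_le]
  have h7 : -(1/2 : ℝ) * (∫ x, g x * g x * E2d N h c x)
      ≤ ∫ x, ‖gradient f x‖ ^ 2 * Real.exp (-(V μ N hN x) / (h * N)) := by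
    rw [hI2_eq] at hI2_le_I1
    rw [hexpand] at hI2_le_I1
    linarith [hIAnn, hIBP, hI2_le_I1]
  have h8 := mul_le_mul_of_nonneg_left h7 hhN.le
  have h9 : -(h * N) / 2 * (∫ x, g x * g x * E2d N h c x)
      = h * N * (-(1/2 : ℝ) * (∫ x, g x * g x * E2d N h c x)) := by
    ring
  linarith [h6, h8, h9]
end
end

section
/- (Lower bound on G_N off the convex region) Let δ ∈ (0, 1/3), κ = min(δ/2, μ−1), and let G_N, Q_N be as defined below. Then there exists c ∈ ℝ, independent of N and R, such that for every N ∈ ℕ, R > 0 and every x ∈ ℝ^N with (1/N)Σ_k(x_k − x̄)² ≤ R² and δ ≤ x̄² ≤ (1/2)(1 − δ): G_N(x) ≥ N·(δ²/(4κ) − c·R²) + Q_N(x). -/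
open Real Finset

noncomputable section

/-- `Q_N(x) = (κ/2)N x̄² + (1/2)⟨x − x̄, (K − 1)(x − x̄)⟩`. -/
def QN (μ κ : ℝ) (N : ℕ) (hN : N ≠ 0) (x : Fin N → ℝ) : ℝ :=
  κ / 2 * N * avg N x ^ 2
    + 1 / 2 * ∑ k, (x k - avg N x) *
        (Kd μ N hN (fun j => x j - avg N x) k - (x k - avg N x))

/-- `U_N(x) = V_N(x) + ((1+κ)/2)N x̄² − N/4`. -/
def UN (μ κ : ℝ) (N : ℕ) (hN : N ≠ 0) (x : Fin N → ℝ) : ℝ :=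
  V μ N hN x + (1 + κ) / 2 * N * avg N x ^ 2 - (N : ℝ) / 4

/-- `G_N = (1/(2κ))(|∇V_N|² − |∇U_N|²) + U_N`. -/
def GN (μ κ : ℝ) (N : ℕ) (hN : N ≠ 0) (x : EuclideanSpace ℝ (Fin N)) : ℝ :=
  1 / (2 * κ) *
      (‖gradient (fun y : EuclideanSpace ℝ (Fin N) => V μ N hN y) x‖ ^ 2
        - ‖gradient (fun y : EuclideanSpace ℝ (Fin N) => UN μ κ N hN y) x‖ ^ 2)
    + UN μ κ N hN x

/-!
Since `∇U_N = ∇V_N + (1 + κ) x̄ 𝟙` and `K` is symmetric and annihilates constants, `G_N − Q_N` is a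
sum over sites of a polynomial in `x̄`, `x_k − x̄` and `(Kx)_k`; up to terms linear in `x_k − x̄` and
in `(Kx)_k`, which sum to zero, it is `N θ_N(x̄) x̄² / (2κ) + H_N(x)`. The first term is at least
`N δ² / (4κ)` because `θ_N(x̄) ≥ δ/2` and `x̄² ≥ δ`. In `H_N` the cubic term is absorbed by the
quartic one, `y⁴/4 − (x̄/κ) y³ ≥ −(x̄/κ)² y²`, so with
`C = 1/κ² + 3(2 + κ)/(2κ)` and `x̄² ≤ 1/2` we get `H_N(x) ≥ −C x̄² ∑ (x_k − x̄)² ≥ −(C/2) N R²`.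
-/

namespace Kd

variable {μ : ℝ} {N : ℕ} (hN : N ≠ 0)

theorem sum_mul_comm (x v : Fin N → ℝ) :
    ∑ k, x k * Kd μ N hN v k = ∑ k, Kd μ N hN x k * v k := by
  have : NeZero N := ⟨hN⟩
  set c := μ / (4 * Real.sin (π / N) ^ 2)
  have expand : ∀ x v : Fin N → ℝ, ∑ k, x k * Kd μ N hN v k
      = c * (2 * ∑ k, x k * v k - ∑ k, x k * v (k + 1) - ∑ k, x (k + 1) * v k) := by
    intro x v
    have shift : ∑ k, x k * v (k - 1) = ∑ k, x (k + 1) * v k :=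
      Fintype.sum_equiv (Equiv.subRight 1) _ _ fun k => by simp
    rw [← shift]
    simp only [Finset.mul_sum, ← Finset.sum_sub_distrib]
    exact Finset.sum_congr rfl fun k _ => by simp only [Kd, c]; ring
  rw [expand, Finset.sum_congr rfl fun k _ => mul_comm (Kd μ N hN x k) (v k), expand]
  simp only [mul_comm (x _)]
  ring

theorem sum_eq_zero (x : Fin N → ℝ) : ∑ k, Kd μ N hN x k = 0 := by
  have h := sum_mul_comm (μ := μ) hN 1 x
  norm_num [Kd] at h
  simpa [Kd] using h

theorem sub_const (x : Fin N → ℝ) (c : ℝ) : Kd μ N hN (fun j => x j - c) = Kd μ N hN x := by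
  funext k; simp only [Kd]; ring

end Kd

theorem sum_sub_avg_eq_zero (N : ℕ) (x : Fin N → ℝ) : ∑ k, (x k - avg N x) = 0 := by
  rcases eq_or_ne N 0 with rfl | hN
  · simp
  · have hN' : (N : ℝ) ≠ 0 := Nat.cast_ne_zero.mpr hN
    simp [Finset.sum_sub_distrib, avg, mul_div_cancel₀ _ hN']

def theta (κ ξ : ℝ) : ℝ := 1 - κ ^ 2 - 1 / 2 * (4 + 3 * κ) * ξ ^ 2

def HN (κ : ℝ) (N : ℕ) (x : Fin N → ℝ) : ℝ :=
  1 / 4 * ∑ j, (x j - avg N x) ^ 4 - 1 / κ * avg N x * ∑ j, (x j - avg N x) ^ 3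
    - 3 / 2 * ((2 + κ) / κ) * avg N x ^ 2 * ∑ j, (x j - avg N x) ^ 2

theorem EuclideanSpace.hasGradientAt_of_hasFDerivAt {ι : Type*} [Fintype ι]
    {f : EuclideanSpace ℝ ι → ℝ} {f' : EuclideanSpace ℝ ι →L[ℝ] ℝ} {g x : EuclideanSpace ℝ ι}
    (hf : HasFDerivAt f f' x) (hf' : ∀ v, f' v = ∑ i, g i * v i) : HasGradientAt f g x := by
  have : (InnerProductSpace.toDual ℝ _ g : EuclideanSpace ℝ ι →L[ℝ] ℝ) = f' := by
    ext v
    simp [hf', PiLp.inner_apply, mul_comm]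
  rwa [hasGradientAt_iff_hasFDerivAt, this]

section

variable {μ : ℝ} {N : ℕ} (hN : N ≠ 0)

theorem hasGradientAt_V (x : EuclideanSpace ℝ (Fin N)) :
    HasGradientAt (fun y : EuclideanSpace ℝ (Fin N) => V μ N hN y)
      (WithLp.toLp 2 fun k => x k ^ 3 - x k + Kd μ N hN x k) x := by
  have : NeZero N := ⟨hN⟩
  have hproj (k : Fin N) := PiLp.hasFDerivAt_apply (𝕜 := ℝ) 2 x k
  have hKd (k : Fin N) := ((((hproj k).const_mul 2).sub (hproj (k + 1))).sub
    (hproj (k - 1))).const_mul (μ / (4 * Real.sin (π / N) ^ 2))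
  have hwell (k : Fin N) := ((((hproj k).pow 2).sub_const 1).pow 2).const_mul (1 / 4 : ℝ)
  refine EuclideanSpace.hasGradientAt_of_hasFDerivAt
    ((HasFDerivAt.fun_sum fun k _ => hwell k).add
      ((HasFDerivAt.fun_sum fun k _ => (hproj k).mul (hKd k)).const_mul (1 / 2 : ℝ))) fun v => ?_
  have hsymm := Kd.sum_mul_comm (μ := μ) hN x v
  simp only [Kd] at hsymm
  simp only [add_apply, FunLike.coe_sum, Finset.sum_apply, smul_apply, sub_apply,
    PiLp.proj_apply, smul_eq_mul, Finset.sum_add_distrib]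
  rw [hsymm, ← Finset.sum_add_distrib, Finset.mul_sum, ← Finset.sum_add_distrib]
  exact Finset.sum_congr rfl fun k _ => by simp only [Kd, Pi.sub_apply, nsmul_eq_mul]; ring

theorem hasGradientAt_UN (κ : ℝ) (x : EuclideanSpace ℝ (Fin N)) :
    HasGradientAt (fun y : EuclideanSpace ℝ (Fin N) => UN μ κ N hN y)
      (WithLp.toLp 2 fun k => x k ^ 3 - x k + Kd μ N hN x k + (1 + κ) * avg N x) x := by
  have havg : HasFDerivAt (fun y : EuclideanSpace ℝ (Fin N) => avg N y)
      ((N : ℝ)⁻¹ • ∑ k : Fin N, PiLp.proj (𝕜 := ℝ) 2 (fun _ => ℝ) k) x := by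
    simpa only [avg, div_eq_inv_mul] using (HasFDerivAt.fun_sum (u := Finset.univ) fun k _ =>
      PiLp.hasFDerivAt_apply (𝕜 := ℝ) 2 x k).const_mul (N : ℝ)⁻¹
  refine EuclideanSpace.hasGradientAt_of_hasFDerivAt
    (((hasGradientAt_V hN x).hasFDerivAt.add ((havg.pow 2).const_mul ((1 + κ) / 2 * N))).sub_const
      ((N : ℝ) / 4)) fun v => ?_
  have hN' : (N : ℝ) ≠ 0 := Nat.cast_ne_zero.mpr hN
  simp only [add_apply, smul_apply, FunLike.coe_sum, Finset.sum_apply, PiLp.proj_apply,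
    smul_eq_mul, InnerProductSpace.toDual_apply_apply, PiLp.inner_apply, RCLike.inner_apply,
    conj_trivial, mul_comm (v.ofLp _), add_mul, Finset.sum_add_distrib, ← Finset.mul_sum]
  field_simp
  ring

theorem GN_eq_theta_add_HN_add_QN (κ : ℝ) (hκ : κ ≠ 0) (x : EuclideanSpace ℝ (Fin N)) :
    GN μ κ N hN x
      = N / (2 * κ) * theta κ (avg N x) * avg N x ^ 2 + HN κ N x + QN μ κ N hN x := by
  rw [GN, (hasGradientAt_V hN x).gradient, (hasGradientAt_UN hN κ x).gradient,
    EuclideanSpace.real_norm_sq_eq, EuclideanSpace.real_norm_sq_eq]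
  simp only [UN, V, QN, HN, theta, Kd.sub_const]
  set m := avg N x
  rw [show (N : ℝ) = ∑ _k : Fin N, 1 by simp]
  simp only [Finset.mul_sum, Finset.sum_mul, Finset.sum_div, ← Finset.sum_add_distrib,
    ← Finset.sum_sub_distrib]
  rw [← sub_eq_zero, ← Finset.sum_sub_distrib]
  -- site by site, the difference is linear in `(Kx)_k` and in `x_k − x̄`
  calc _ = ∑ k, ((m / 2 - (1 + κ) * m / κ) * Kd μ N hN x k
        + (m * (m ^ 2 - 1) - (1 + κ) * m * (3 * m ^ 2 - 1) / κ) * (x k - m)) :=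
        Finset.sum_congr rfl fun k _ => by field_simp; ring
    _ = 0 := by
      rw [Finset.sum_add_distrib, ← Finset.mul_sum, ← Finset.mul_sum, Kd.sum_eq_zero, sum_sub_avg_eq_zero]
      ring

end

theorem half_le_theta {κ δ ξ : ℝ} (hκ : 0 ≤ κ) (hκδ : κ ≤ δ / 2) (hξ : ξ ^ 2 ≤ 1 / 2 * (1 - δ)) :
    δ / 2 ≤ theta κ ξ := by
  unfold theta
  nlinarith [mul_le_mul_of_nonneg_left hξ (by positivity : (0 : ℝ) ≤ 4 + 3 * κ)]

theorem neg_sq_mul_sq_le (a y : ℝ) : -(a ^ 2 * y ^ 2) ≤ y ^ 4 / 4 - a * y ^ 3 := by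
  nlinarith [sq_nonneg (y ^ 2 / 2 - a * y)]

theorem neg_mul_sum_sq_le_HN (κ : ℝ) (N : ℕ) (x : Fin N → ℝ) :
    -((1 / κ ^ 2 + 3 / 2 * ((2 + κ) / κ)) * avg N x ^ 2 * ∑ j, (x j - avg N x) ^ 2)
      ≤ HN κ N x := by
  have h := Finset.sum_le_sum fun j (_ : j ∈ Finset.univ) =>
    neg_sq_mul_sq_le (avg N x / κ) (x j - avg N x)
  rw [Finset.sum_neg_distrib, Finset.sum_sub_distrib, ← Finset.mul_sum, ← Finset.sum_div,
    ← Finset.mul_sum] at h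
  unfold HN
  linear_combination h

theorem stmt_18_general (μ : ℝ) (hμ : 1 < μ) (δ : ℝ) (hδ0 : 0 < δ)
    (κ : ℝ) (hκ : κ = min (δ / 2) (μ - 1)) :
    ∃ c : ℝ, ∀ N : ℕ, ∀ hN : N ≠ 0, ∀ R : ℝ, 0 < R →
      ∀ x : EuclideanSpace ℝ (Fin N),
        (1 / N : ℝ) * ∑ k, (x k - avg N x) ^ 2 ≤ R ^ 2 →
        δ ≤ avg N x ^ 2 → avg N x ^ 2 ≤ 1 / 2 * (1 - δ) →
        GN μ κ N hN x ≥ N * (δ ^ 2 / (4 * κ) - c * R ^ 2) + QN μ κ N hN x := by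
  have hκ0 : 0 < κ := hκ ▸ lt_min (by linarith) (by linarith)
  have hκδ : κ ≤ δ / 2 := hκ ▸ min_le_left _ _
  set C := 1 / κ ^ 2 + 3 / 2 * ((2 + κ) / κ)
  refine ⟨C / 2, fun N hN R _ x hvar hlo hhi => ?_⟩
  set m := avg N x
  set S := ∑ k, (x k - m) ^ 2
  have hN0 : (0 : ℝ) < N := Nat.cast_pos.mpr (Nat.pos_of_ne_zero hN)
  have hS : S ≤ N * R ^ 2 := by rwa [one_div, inv_mul_le_iff₀ hN0] at hvar
  have hθ := half_le_theta hκ0.le hκδ hhi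
  have hbulk : N * (δ ^ 2 / (4 * κ)) ≤ N / (2 * κ) * theta κ m * m ^ 2 := by
    calc N * (δ ^ 2 / (4 * κ)) = N / (2 * κ) * (δ / 2 * δ) := by ring
      _ ≤ N / (2 * κ) * (theta κ m * m ^ 2) := by gcongr; linarith
      _ = _ := by ring
  have hfluct : -(N * (C / 2 * R ^ 2)) ≤ HN κ N x := by
    calc -(N * (C / 2 * R ^ 2)) = -(C * (1 / 2) * (N * R ^ 2)) := by ring
      _ ≤ -(C * m ^ 2 * S) := by gcongr; linarith
      _ ≤ HN κ N x := neg_mul_sum_sq_le_HN κ N x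
  rw [GN_eq_theta_add_HN_add_QN hN κ hκ0.ne' x]
  linarith

/-- Lower bound on `G_N` off the convex region: for `δ ∈ (0,1/3)`, `κ = min(δ/2, μ−1)`,
there is `c`, independent of `N` and `R`, with
`G_N(x) ≥ N(δ²/(4κ) − cR²) + Q_N(x)` whenever `(1/N)∑(xₖ−x̄)² ≤ R²` and `δ ≤ x̄² ≤ (1−δ)/2`. -/
theorem stmt_18 (μ : ℝ) (hμ : 1 < μ) (δ : ℝ) (hδ0 : 0 < δ) (hδ3 : δ < 1 / 3)
    (κ : ℝ) (hκ : κ = min (δ / 2) (μ - 1)) :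
    ∃ c : ℝ, ∀ N : ℕ, ∀ hN : N ≠ 0, ∀ R : ℝ, 0 < R →
      ∀ x : EuclideanSpace ℝ (Fin N),
        (1 / N : ℝ) * ∑ k, (x k - avg N x) ^ 2 ≤ R ^ 2 →
        δ ≤ avg N x ^ 2 → avg N x ^ 2 ≤ 1 / 2 * (1 - δ) →
        GN μ κ N hN x ≥ N * (δ ^ 2 / (4 * κ) - c * R ^ 2) + QN μ κ N hN x :=
  stmt_18_general μ hμ δ hδ0 κ hκ
end
end
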